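/- arXiv:1705.02548 — 4 statements merged into one kernel-verified Lean document; each statement's English description precedes it below -/
import Mathlib

section
/- Let φ be a nonnegative locally integrable function on (0,∞) and suppose H_φ is bounded on L¹(ℝ), i.e., there exists C ≥ 0 with ‖H_φ f‖_{L¹} ≤ C ‖f‖_{L¹} for all f ∈ L¹(ℝ). Then ∫₀^∞ φ(t) dt ≤ C. In particular ∫₀^∞ φ(t) dt < ∞. -/
/-! Tonelli and the substitution `x = t y` give `‖H_φ u‖₁ = (∫₀^∞ φ) ‖u‖₁` for every nonnegative
`u` for which the integrals defining `H_φ u` converge; testing the bound on `u = 𝟙_[1,2]` gives the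
claim. -/

open MeasureTheory Set
open scoped ENNReal

theorem Complex.enorm_ofReal_of_nonneg {r : ℝ} (hr : 0 ≤ r) : ‖(r : ℂ)‖ₑ = ENNReal.ofReal r := by
  rw [← ofReal_norm, Complex.norm_real, Real.norm_of_nonneg hr]

noncomputable def hausdorffOperator (φ : ℝ → ℝ) (f : ℝ → ℂ) (x : ℝ) : ℂ :=
  ∫ t in Ioi (0:ℝ), f (x / t) * ((φ t / t : ℝ) : ℂ)

theorem lintegral_comp_div_of_pos {t : ℝ} (ht : 0 < t) (F : ℝ → ℝ≥0∞) :
    ∫⁻ x, F (x / t) = ENNReal.ofReal t * ∫⁻ y, F y := by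
  have ht' : t⁻¹ ≠ 0 := inv_ne_zero ht.ne'
  simp_rw [div_eq_mul_inv]
  rw [← (measurableEmbedding_mulRight₀ ht').lintegral_map, Real.map_volume_mul_right ht',
    lintegral_smul_measure, inv_inv, abs_of_pos ht, smul_eq_mul]

theorem lintegral_lintegral_comp_div_mul_of_measurable {F φ : ℝ → ℝ≥0∞} (hF : Measurable F)
    (hφ : Measurable φ) :
    ∫⁻ x, ∫⁻ t in Ioi 0, F (x / t) * (φ t / ENNReal.ofReal t) =
      (∫⁻ t in Ioi 0, φ t) * ∫⁻ y, F y := by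
  have hmeas : Measurable (Function.uncurry fun x t => F (x / t) * (φ t / ENNReal.ofReal t)) :=
    (hF.comp (measurable_fst.div measurable_snd)).mul
      ((hφ.comp measurable_snd).div measurable_snd.ennreal_ofReal)
  rw [lintegral_lintegral_swap hmeas.aemeasurable, ← lintegral_mul_const _ hφ]
  refine setLIntegral_congr_fun measurableSet_Ioi fun t ht => ?_
  have hFt : Measurable fun x => F (x / t) := hF.comp (measurable_id.div_const t)
  rw [lintegral_mul_const _ hFt, lintegral_comp_div_of_pos ht, mul_right_comm,
    ENNReal.mul_div_cancel (by simpa using ht) ENNReal.ofReal_ne_top, mul_comm]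

theorem lintegral_lintegral_comp_div_mul {F φ : ℝ → ℝ≥0∞} (hF : Measurable F)
    (hφ : AEMeasurable φ (volume.restrict (Ioi 0))) :
    ∫⁻ x, ∫⁻ t in Ioi 0, F (x / t) * (φ t / ENNReal.ofReal t) =
      (∫⁻ t in Ioi 0, φ t) * ∫⁻ y, F y := by
  have hmk : ∀ x, ∫⁻ t in Ioi 0, F (x / t) * (φ t / ENNReal.ofReal t) =
      ∫⁻ t in Ioi 0, F (x / t) * (hφ.mk φ t / ENNReal.ofReal t) := fun x =>
    lintegral_congr_ae <| hφ.ae_eq_mk.mono fun t ht => by simp only [ht]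
  simp_rw [hmk, lintegral_lintegral_comp_div_mul_of_measurable hF hφ.measurable_mk,
    lintegral_congr_ae hφ.ae_eq_mk]

theorem enorm_hausdorffOperator_ofReal {φ u : ℝ → ℝ} (hφ : ∀ t ∈ Ioi (0:ℝ), 0 ≤ φ t)
    (hu : ∀ y, 0 ≤ u y) {x : ℝ} (hint : IntegrableOn (fun t => u (x / t) * (φ t / t)) (Ioi 0)) :
    ‖hausdorffOperator φ (fun y => (u y : ℂ)) x‖ₑ =
      ∫⁻ t in Ioi 0, ENNReal.ofReal (u (x / t)) * (ENNReal.ofReal (φ t) / ENNReal.ofReal t) := by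
  have hnonneg : ∀ t ∈ Ioi (0:ℝ), 0 ≤ u (x / t) * (φ t / t) := fun t ht =>
    mul_nonneg (hu _) (div_nonneg (hφ t ht) (le_of_lt ht))
  have hcast : hausdorffOperator φ (fun y => (u y : ℂ)) x =
      ((∫ t in Ioi 0, u (x / t) * (φ t / t) : ℝ) : ℂ) := by
    rw [hausdorffOperator, ← integral_complex_ofReal]
    push_cast
    rfl
  rw [hcast, Complex.enorm_ofReal_of_nonneg (setIntegral_nonneg measurableSet_Ioi hnonneg),
    ofReal_integral_eq_lintegral_ofReal hint (ae_restrict_of_forall_mem measurableSet_Ioi hnonneg)]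
  refine setLIntegral_congr_fun measurableSet_Ioi fun t ht => ?_
  rw [ENNReal.ofReal_mul (hu _), ENNReal.ofReal_div_of_pos ht]

theorem eLpNorm_hausdorffOperator_ofReal {φ u : ℝ → ℝ} (hφ : ∀ t ∈ Ioi (0:ℝ), 0 ≤ φ t)
    (hφm : AEMeasurable φ (volume.restrict (Ioi 0))) (hu : ∀ y, 0 ≤ u y) (hum : Measurable u)
    (hint : ∀ x, IntegrableOn (fun t => u (x / t) * (φ t / t)) (Ioi 0)) :
    eLpNorm (hausdorffOperator φ fun y => (u y : ℂ)) 1 volume =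
      (∫⁻ t in Ioi 0, ENNReal.ofReal (φ t)) * eLpNorm (fun y => (u y : ℂ)) 1 volume := by
  simp_rw [eLpNorm_one_eq_lintegral_enorm, enorm_hausdorffOperator_ofReal hφ hu (hint _),
    Complex.enorm_ofReal_of_nonneg (hu _)]
  exact lintegral_lintegral_comp_div_mul hum.ennreal_ofReal hφm.ennreal_ofReal

theorem integrableOn_indicator_comp_div_mul {φ : ℝ → ℝ} (hloc : LocallyIntegrableOn φ (Ioi 0))
    {a b : ℝ} (ha : 0 < a) (hb : 0 < b) (x : ℝ) :
    IntegrableOn (fun t => (Icc a b).indicator 1 (x / t) * (φ t / t)) (Ioi 0) := by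
  have hmem : ∀ t ∈ Ioi (0:ℝ), x / t ∈ Icc a b ↔ t ∈ Icc (x / b) (x / a) := by
    intro t ht
    rw [mem_Icc, mem_Icc, le_div_iff₀ ht, div_le_iff₀ ht, div_le_iff₀ hb, le_div_iff₀ ha,
      mul_comm a, mul_comm b]
    exact and_comm
  have heq : EqOn (fun t => (Icc a b).indicator 1 (x / t) * (φ t / t))
      ((Icc (x / b) (x / a)).indicator fun t => φ t / t) (Ioi 0) := by
    intro t ht
    simp only [indicator_apply, hmem t ht, Pi.one_apply, ite_mul, one_mul, zero_mul]
  rw [integrableOn_congr_fun heq measurableSet_Ioi,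
    integrableOn_indicator_iff measurableSet_Icc]
  rcases le_or_gt x 0 with hx | hx
  · have hempty : Icc (x / b) (x / a) ∩ Ioi 0 = ∅ :=
      eq_empty_of_forall_notMem fun t ht =>
        (ht.1.2.trans (div_nonpos_of_nonpos_of_nonneg hx ha.le)).not_gt ht.2
    simp [hempty]
  · have hsub : Icc (x / b) (x / a) ⊆ Ioi 0 := fun t ht => (div_pos hx hb).trans_le ht.1
    have hloc' : LocallyIntegrableOn (fun t => φ t / t) (Ioi 0) := by
      simp_rw [div_eq_mul_inv]
      exact hloc.mul_continuousOn (continuousOn_inv₀.mono fun t ht => ne_of_gt ht)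
        isOpen_Ioi.isLocallyClosed
    rw [inter_eq_self_of_subset_left hsub]
    exact hloc'.integrableOn_compact_subset hsub isCompact_Icc

theorem hausdorff_L1_necessary_general (φ : ℝ → ℝ) (hφ : ∀ t ∈ Ioi (0:ℝ), 0 ≤ φ t)
    (hloc : LocallyIntegrableOn φ (Ioi 0)) (C : ℝ)
    (hbd : ∀ f : ℝ → ℂ, Integrable f →
      eLpNorm (fun x : ℝ => ∫ t in Ioi (0:ℝ), f (x / t) * ((φ t / t : ℝ) : ℂ)) 1 volume ≤
        ENNReal.ofReal C * eLpNorm f 1 volume) :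
    (∫⁻ t in Ioi (0:ℝ), ENNReal.ofReal (φ t)) ≤ ENNReal.ofReal C ∧
      (∫⁻ t in Ioi (0:ℝ), ENNReal.ofReal (φ t)) < ⊤ := by
  set u : ℝ → ℝ := (Icc 1 2).indicator 1
  have hu : ∀ y, 0 ≤ u y := fun y => indicator_nonneg (fun _ _ => zero_le_one) y
  have hum : Measurable u := measurable_one.indicator measurableSet_Icc
  have hu_int : Integrable fun y => (u y : ℂ) :=
    ((integrable_indicator_iff measurableSet_Icc).2 (integrableOn_const (by simp))).ofReal
  have hu_norm : eLpNorm (fun y => (u y : ℂ)) 1 volume = 1 := by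
    rw [eLpNorm_one_eq_lintegral_enorm]
    have hind : ∀ y, ‖(u y : ℂ)‖ₑ = (Icc (1:ℝ) 2).indicator 1 y := fun y => by
      rw [Complex.enorm_ofReal_of_nonneg (hu y)]
      by_cases hy : y ∈ Icc (1:ℝ) 2 <;> simp [u, hy]
    simp_rw [hind]
    rw [lintegral_indicator_one measurableSet_Icc, Real.volume_Icc]
    norm_num
  have hH : eLpNorm (hausdorffOperator φ fun y => (u y : ℂ)) 1 volume ≤
      ENNReal.ofReal C * eLpNorm (fun y => (u y : ℂ)) 1 volume := hbd (fun y => (u y : ℂ)) hu_int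
  rw [eLpNorm_hausdorffOperator_ofReal hφ hloc.aestronglyMeasurable.aemeasurable hu hum
    (integrableOn_indicator_comp_div_mul hloc one_pos two_pos), hu_norm, mul_one, mul_one] at hH
  exact ⟨hH, hH.trans_lt ENNReal.ofReal_lt_top⟩

/-- If φ ≥ 0 is locally integrable on (0,∞) and H_φ is bounded on L¹(ℝ) with
‖H_φ f‖₁ ≤ C ‖f‖₁ for all f ∈ L¹, then ∫₀^∞ φ(t) dt ≤ C; in particular the integral is finite. -/
theorem hausdorff_L1_necessary (φ : ℝ → ℝ) (hφ : ∀ t ∈ Ioi (0:ℝ), 0 ≤ φ t)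
    (hloc : LocallyIntegrableOn φ (Ioi 0)) (C : ℝ) (hC : 0 ≤ C)
    (hbd : ∀ f : ℝ → ℂ, Integrable f →
      eLpNorm (fun x : ℝ => ∫ t in Ioi (0:ℝ), f (x / t) * ((φ t / t : ℝ) : ℂ)) 1 volume ≤
        ENNReal.ofReal C * eLpNorm f 1 volume) :
    (∫⁻ t in Ioi (0:ℝ), ENNReal.ofReal (φ t)) ≤ ENNReal.ofReal C ∧
      (∫⁻ t in Ioi (0:ℝ), ENNReal.ofReal (φ t)) < ⊤ :=
  hausdorff_L1_necessary_general φ hφ hloc C hbd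
end

section
/- Let p ∈ [1,∞) and let φ be a nonnegative locally integrable function on (0,∞)ⁿ with ∫_{(0,∞)ⁿ} φ(t)/(t₁^{1-1/p}⋯tₙ^{1-1/p}) dt < ∞. Then for every f ∈ L^p(ℝⁿ), ‖H_φ f‖_{L^p(ℝⁿ)} ≤ (∫_{(0,∞)ⁿ} φ(t)/(t₁^{1-1/p}⋯tₙ^{1-1/p}) dt) ‖f‖_{L^p(ℝⁿ)}. -/
open MeasureTheory Set
open scoped ENNReal

/-!
Minkowski's integral inequality moves the `L^p` norm inside the `t`-integral. The dilation
`x ↦ (xᵢ / tᵢ)ᵢ` scales Lebesgue measure by `∏ tᵢ`, so `x ↦ f (x / t)` has `L^p` norm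
`(∏ tᵢ)^{1/p} ‖f‖_p`, and this factor turns the kernel `φ(t) / ∏ tᵢ` into
`φ(t) / ∏ tᵢ^{1-1/p}`.

For Minkowski's inequality, with `G x = ∫ g(x, t) dt` and `1/p + 1/q = 1`, Tonelli and Hölder
give `∫ G^p ≤ ∫∫ G(x)^{p-1} g(x, t) dx dt ≤ J (∫ G^p)^{1/q}`, `J` being the right-hand side.
Cancelling `(∫ G^p)^{1/q}` needs `∫ G^p < ∞`, so the argument is run on truncations of `G`
(bounded, supported in sets of finite measure) and passed to the limit by monotone convergence.
-/

namespace ENNReal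

theorem rpow_one_div_le_of_le_mul_rpow {p q : ℝ} (hpq : p.HolderConjugate q) {a b : ℝ≥0∞}
    (ha : a ≠ ⊤) (h : a ≤ b * a ^ (1 / q)) : a ^ (1 / p) ≤ b := by
  rcases eq_or_ne a 0 with rfl | ha₀
  · exact (ENNReal.zero_rpow_of_pos hpq.one_div_pos).trans_le bot_le
  have hsplit : a ^ (1 / p) * a ^ (1 / q) = a := by
    rw [← ENNReal.rpow_add _ _ ha₀ ha, hpq.one_div_add_one_div, div_one, ENNReal.rpow_one]
  exact (ENNReal.mul_le_mul_iff_left (ENNReal.rpow_pos (pos_iff_ne_zero.2 ha₀) ha).ne'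
    (ENNReal.rpow_ne_top_of_nonneg hpq.symm.one_div_nonneg ha)).1 (hsplit.le.trans h)

theorem iSup_rpow {ι : Sort*} (f : ι → ℝ≥0∞) {p : ℝ} (hp : 0 < p) :
    (⨆ i, f i) ^ p = ⨆ i, f i ^ p :=
  (ENNReal.orderIsoRpow p hp).map_iSup f

end ENNReal

section Minkowski

variable {α β : Type*} [MeasurableSpace α] [MeasurableSpace β] {μ : Measure α} {ν : Measure β}

theorem iSup_indicator_spanningSets_min_natCast [SigmaFinite μ] (G : α → ℝ≥0∞) (x : α) :
    ⨆ k : ℕ, (spanningSets μ k).indicator (fun y => min (G y) k) x = G x := by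
  refine le_antisymm (iSup_le fun k => (indicator_le_self _ _ x).trans (min_le_left _ _)) ?_
  have hx := mem_spanningSetsIndex μ x
  calc G x = ⨆ m : ℕ, min (G x) m := by rw [← inf_iSup_eq, ENNReal.iSup_natCast, inf_top_eq]
    _ ≤ _ := iSup_le fun m => le_iSup_of_le (max (spanningSetsIndex μ x) m) <| by
        rw [indicator_of_mem (monotone_spanningSets μ (le_max_left _ _) hx)]
        gcongr
        exact le_max_right _ _

theorem exists_lintegral_rpow_eq_iSup_of_measurable [SigmaFinite μ] {G : α → ℝ≥0∞}
    (hG : Measurable G) {p : ℝ} (hp : 0 < p) :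
    ∃ H : ℕ → α → ℝ≥0∞, (∀ k, Measurable (H k)) ∧ (∀ k, H k ≤ G) ∧
      (∀ k, ∫⁻ x, H k x ^ p ∂μ ≠ ⊤) ∧ ∫⁻ x, G x ^ p ∂μ = ⨆ k, ∫⁻ x, H k x ^ p ∂μ := by
  set H : ℕ → α → ℝ≥0∞ := fun k => (spanningSets μ k).indicator fun y => min (G y) k
  have hH : ∀ k, Measurable (H k) := fun k =>
    (hG.min measurable_const).indicator (measurableSet_spanningSets μ k)
  have hH_mono : Monotone H := fun k l hkl x =>
    (indicator_le_indicator_of_subset (monotone_spanningSets μ hkl) (fun _ => zero_le) x).trans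
      (indicator_le_indicator (min_le_min_left _ (Nat.cast_le.2 hkl)))
  refine ⟨H, hH, fun k x =>
    (le_iSup (H · x) k).trans_eq (iSup_indicator_spanningSets_min_natCast (μ := μ) G x),
    fun k => ?_, ?_⟩
  · have hle : ∀ x, H k x ^ p ≤ (spanningSets μ k).indicator (fun _ => (k : ℝ≥0∞) ^ p) x := by
      intro x
      by_cases hx : x ∈ spanningSets μ k
      · simp only [H, indicator_of_mem hx]
        gcongr
        exact min_le_right _ _
      · simp [H, indicator_of_notMem hx, ENNReal.zero_rpow_of_pos hp]
    refine ne_top_of_le_ne_top ?_ (lintegral_mono hle)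
    rw [lintegral_indicator_const (measurableSet_spanningSets μ k)]
    exact ENNReal.mul_ne_top (by simp [hp.le]) (measure_spanningSets_lt_top μ k).ne
  · rw [← lintegral_iSup (fun k => (hH k).pow_const p)
      fun k l hkl x => ENNReal.rpow_le_rpow (hH_mono hkl x) hp.le]
    simp only [← ENNReal.iSup_rpow _ hp, iSup_indicator_spanningSets_min_natCast, H]

theorem lintegral_rpow_le_of_le_lintegral [SFinite μ] [SFinite ν] {p q : ℝ}
    (hpq : p.HolderConjugate q) {g : α × β → ℝ≥0∞} (hg : Measurable g) {H : α → ℝ≥0∞}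
    (hH : Measurable H) (hHg : ∀ x, H x ≤ ∫⁻ t, g (x, t) ∂ν)
    (hHp : ∫⁻ x, H x ^ p ∂μ ≠ ⊤) :
    (∫⁻ x, H x ^ p ∂μ) ^ (1 / p) ≤ ∫⁻ t, (∫⁻ x, g (x, t) ^ p ∂μ) ^ (1 / p) ∂ν := by
  set I := ∫⁻ x, H x ^ p ∂μ
  refine ENNReal.rpow_one_div_le_of_le_mul_rpow hpq hHp ?_
  have hHg_meas : Measurable fun z : α × β => H z.1 ^ (p - 1) * g z :=
    ((hH.comp measurable_fst).pow_const _).mul hg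
  calc I = ∫⁻ x, H x ^ (p - 1) * H x ∂μ := by
        refine lintegral_congr fun x => ?_
        conv_lhs => rw [← sub_add_cancel p 1]
        rw [ENNReal.rpow_add_of_nonneg _ _ hpq.sub_one_pos.le zero_le_one, ENNReal.rpow_one]
    _ ≤ ∫⁻ x, H x ^ (p - 1) * ∫⁻ t, g (x, t) ∂ν ∂μ := by gcongr with x; exact hHg x
    _ = ∫⁻ x, ∫⁻ t, H x ^ (p - 1) * g (x, t) ∂ν ∂μ :=
        lintegral_congr fun x => (lintegral_const_mul _ (hg.comp measurable_prodMk_left)).symm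
    _ = ∫⁻ t, ∫⁻ x, H x ^ (p - 1) * g (x, t) ∂μ ∂ν :=
        lintegral_lintegral_swap hHg_meas.aemeasurable
    _ ≤ ∫⁻ t, (∫⁻ x, g (x, t) ^ p ∂μ) ^ (1 / p) * (∫⁻ x, (H x ^ (p - 1)) ^ q ∂μ) ^ (1 / q) ∂ν := by
        gcongr with t
        exact le_of_eq_of_le (lintegral_congr fun x => mul_comm _ _)
          (ENNReal.lintegral_mul_le_Lp_mul_Lq μ hpq (f := fun x => g (x, t))
            (hg.comp measurable_prodMk_right).aemeasurable (hH.pow_const _).aemeasurable)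
    _ = ∫⁻ t, (∫⁻ x, g (x, t) ^ p ∂μ) ^ (1 / p) * I ^ (1 / q) ∂ν := by
        simp only [← ENNReal.rpow_mul, hpq.sub_one_mul_conj, I]
    _ = (∫⁻ t, (∫⁻ x, g (x, t) ^ p ∂μ) ^ (1 / p) ∂ν) * I ^ (1 / q) :=
        lintegral_mul_const' _ _ (ENNReal.rpow_ne_top_of_nonneg hpq.symm.one_div_nonneg hHp)

theorem lintegral_lintegral_rpow_le [SigmaFinite μ] [SFinite ν] {p : ℝ} (hp : 1 ≤ p)
    {g : α × β → ℝ≥0∞} (hg : Measurable g) :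
    (∫⁻ x, (∫⁻ t, g (x, t) ∂ν) ^ p ∂μ) ^ (1 / p) ≤
      ∫⁻ t, (∫⁻ x, g (x, t) ^ p ∂μ) ^ (1 / p) ∂ν := by
  rcases hp.eq_or_lt with rfl | hp
  · simpa using (lintegral_lintegral_swap (f := fun x t => g (x, t)) hg.aemeasurable).le
  obtain ⟨H, hH, hHG, hHp, hsup⟩ := exists_lintegral_rpow_eq_iSup_of_measurable (μ := μ)
    (hg.lintegral_prod_right' (ν := ν)) (zero_lt_one.trans hp)
  rw [hsup, ENNReal.iSup_rpow _ (one_div_pos.2 (zero_lt_one.trans hp))]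
  exact iSup_le fun k => lintegral_rpow_le_of_le_lintegral (.conjExponent hp) hg (hH k)
    (hHG k) (hHp k)

theorem eLpNorm_lintegral_le [SigmaFinite μ] [SFinite ν] {p : ℝ≥0∞} (hp : 1 ≤ p)
    (hp_top : p ≠ ∞) {g : α × β → ℝ≥0∞} (hg : AEMeasurable g (μ.prod ν)) :
    eLpNorm (fun x => ∫⁻ t, g (x, t) ∂ν) p μ ≤ ∫⁻ t, eLpNorm (fun x => g (x, t)) p μ ∂ν := by
  have hleft : (fun x => ∫⁻ t, g (x, t) ∂ν) =ᵐ[μ] fun x => ∫⁻ t, hg.mk g (x, t) ∂ν :=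
    (Measure.ae_ae_eq_curry_of_prod hg.ae_eq_mk).mono fun x hx => lintegral_congr_ae hx
  have hright : ∀ᵐ t ∂ν, (fun x => g (x, t)) =ᵐ[μ] fun x => hg.mk g (x, t) :=
    Measure.ae_ae_eq_curry_of_prod
      ((Measure.measurePreserving_swap (μ := ν) (ν := μ)).quasiMeasurePreserving.ae_eq_comp
        hg.ae_eq_mk)
  have hp₀ : p ≠ 0 := (zero_lt_one.trans_le hp).ne'
  rw [eLpNorm_congr_ae hleft, lintegral_congr_ae (hright.mono fun t ht => eLpNorm_congr_ae ht)]
  simp only [eLpNorm_eq_lintegral_rpow_enorm_toReal hp₀ hp_top, enorm_eq_self]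
  exact lintegral_lintegral_rpow_le
    (ENNReal.toReal_mono hp_top hp |>.trans_eq' ENNReal.toReal_one.symm) hg.measurable_mk

theorem eLpNorm_integral_le {E : Type*} [NormedAddCommGroup E] [NormedSpace ℝ E]
    [SigmaFinite μ] [SFinite ν] {p : ℝ≥0∞} (hp : 1 ≤ p) (hp_top : p ≠ ∞) {F : α × β → E}
    (hF : AEStronglyMeasurable F (μ.prod ν)) :
    eLpNorm (fun x => ∫ t, F (x, t) ∂ν) p μ ≤ ∫⁻ t, eLpNorm (fun x => F (x, t)) p μ ∂ν :=
  calc eLpNorm (fun x => ∫ t, F (x, t) ∂ν) p μ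
      ≤ eLpNorm (fun x => ∫⁻ t, ‖F (x, t)‖ₑ ∂ν) p μ := by
        refine eLpNorm_mono_enorm fun x => ?_
        rw [enorm_eq_self]
        exact enorm_integral_le_lintegral_enorm _
    _ ≤ ∫⁻ t, eLpNorm (fun x => ‖F (x, t)‖ₑ) p μ ∂ν :=
        eLpNorm_lintegral_le (g := fun z => ‖F z‖ₑ) hp hp_top hF.enorm
    _ = ∫⁻ t, eLpNorm (fun x => F (x, t)) p μ ∂ν := lintegral_congr fun t => eLpNorm_enorm _

end Minkowski

section Dilation

variable {ι : Type*} [Fintype ι] {t : ι → ℝ}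

theorem Real.map_div_volume_pi (ht : ∀ i, t i ≠ 0) :
    Measure.map (fun x : ι → ℝ => fun i => x i / t i) volume =
      ENNReal.ofReal |∏ i, t i| • volume := by
  classical
  have hL : ⇑(Matrix.toLin' (Matrix.diagonal fun i => (t i)⁻¹)) =
      fun x : ι → ℝ => fun i => x i / t i := by
    ext x i
    simp [Matrix.mulVec_diagonal, div_eq_inv_mul]
  have hdet : (Matrix.diagonal fun i => (t i)⁻¹).det ≠ 0 := by
    simp [Matrix.det_diagonal, Finset.prod_ne_zero_iff, ht]
  rw [← hL, Real.map_matrix_volume_pi_eq_smul_volume_pi hdet, Matrix.det_diagonal,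
    Finset.prod_inv_distrib, inv_inv]

theorem Real.quasiMeasurePreserving_div_pi (ht : ∀ i, t i ≠ 0) :
    Measure.QuasiMeasurePreserving (fun x : ι → ℝ => fun i => x i / t i) :=
  ⟨by fun_prop, by rw [Real.map_div_volume_pi ht]; exact Measure.smul_absolutelyContinuous⟩

theorem eLpNorm_comp_div_pi {E : Type*} [NormedAddCommGroup E] {f : (ι → ℝ) → E}
    (hf : AEStronglyMeasurable f volume) {p : ℝ≥0∞} (hp : p ≠ ∞) (ht : ∀ i, t i ≠ 0) :
    eLpNorm (fun x : ι → ℝ => f fun i => x i / t i) p volume =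
      ENNReal.ofReal |∏ i, t i| ^ (1 / p).toReal * eLpNorm f p volume := by
  have hmap := Real.map_div_volume_pi ht
  rw [← smul_eq_mul, ← eLpNorm_smul_measure_of_ne_top hp, ← hmap,
    eLpNorm_map_measure (hmap ▸ hf.smul_measure _)
      (Real.quasiMeasurePreserving_div_pi ht).aemeasurable]
  rfl

theorem aestronglyMeasurable_comp_div_pi_prod {E : Type*} [TopologicalSpace E]
    {f : (ι → ℝ) → E} (hf : AEStronglyMeasurable f volume) {ν : Measure (ι → ℝ)} [SFinite ν]
    (hν : ∀ᵐ t ∂ν, ∀ i, t i ≠ 0) :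
    AEStronglyMeasurable (fun z : (ι → ℝ) × (ι → ℝ) => f fun i => z.1 i / z.2 i)
      (volume.prod ν) :=
  hf.comp_quasiMeasurePreserving <| QuasiMeasurePreserving.prod_of_left (by fun_prop) <|
    hν.mono fun _ ht => Real.quasiMeasurePreserving_div_pi ht

end Dilation

theorem measurableSet_setOf_forall_pos {ι : Type*} [Countable ι] :
    MeasurableSet {t : ι → ℝ | ∀ i, 0 < t i} := by
  simpa only [ofPred_forall] using
    MeasurableSet.iInter fun i => measurableSet_lt measurable_const (measurable_pi_apply i)

section Orthant

variable {ι : Type*} [Fintype ι]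

theorem aestronglyMeasurable_div_prod_of_div_prod_rpow {φ : (ι → ℝ) → ℝ} {r : ℝ}
    (hφ : AEStronglyMeasurable (fun t => φ t / ∏ i, t i ^ r)
      (volume.restrict {t | ∀ i, 0 < t i})) :
    AEStronglyMeasurable (fun t => φ t / ∏ i, t i) (volume.restrict {t | ∀ i, 0 < t i}) := by
  refine (hφ.mul (by fun_prop : Measurable fun t : ι → ℝ =>
    (∏ i, t i ^ r) / ∏ i, t i).aestronglyMeasurable).congr ?_
  filter_upwards [ae_restrict_mem measurableSet_setOf_forall_pos] with t ht
  have hr : ∏ i, t i ^ r ≠ 0 :=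
    Finset.prod_ne_zero_iff.2 fun i _ => (Real.rpow_pos_of_pos (ht i) _).ne'
  rw [Pi.mul_apply, mul_div_assoc', div_mul_cancel₀ _ hr]

theorem ofReal_div_prod_mul_ofReal_prod_rpow {a : ℝ} (ha : 0 ≤ a) {t : ι → ℝ}
    (ht : ∀ i, 0 < t i) (p : ℝ) :
    ENNReal.ofReal (a / ∏ i, t i) * ENNReal.ofReal (∏ i, t i) ^ (1 / p) =
      ENNReal.ofReal (a / ∏ i, t i ^ (1 - 1 / p)) := by
  have hP : 0 < ∏ i, t i := Finset.prod_pos fun i _ => ht i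
  rw [ENNReal.ofReal_rpow_of_pos hP, ← ENNReal.ofReal_mul (div_nonneg ha hP.le),
    Real.finsetProd_rpow _ _ (fun i _ => (ht i).le), Real.rpow_sub hP, Real.rpow_one]
  congr 1
  have := (Real.rpow_pos_of_pos hP (1 / p)).ne'
  field_simp

theorem eLpNorm_comp_div_pi_mul_ofReal {f : (ι → ℝ) → ℂ} (hf : AEStronglyMeasurable f volume)
    {p : ℝ} (hp : 0 < p) {a : ℝ} (ha : 0 ≤ a) {t : ι → ℝ} (ht : ∀ i, 0 < t i) :
    eLpNorm (fun x : ι → ℝ => f (fun i => x i / t i) * ((a / ∏ i, t i : ℝ) : ℂ))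
        (ENNReal.ofReal p) volume =
      ENNReal.ofReal (a / ∏ i, t i ^ (1 - 1 / p)) * eLpNorm f (ENNReal.ofReal p) volume := by
  have hP : 0 < ∏ i, t i := Finset.prod_pos fun i _ => ht i
  rw [show (fun x : ι → ℝ => f (fun i => x i / t i) * ((a / ∏ i, t i : ℝ) : ℂ)) =
      ((a / ∏ i, t i : ℝ) : ℂ) • fun x => f fun i => x i / t i from
        funext fun x => mul_comm _ _,
    eLpNorm_const_smul, eLpNorm_comp_div_pi hf ENNReal.ofReal_ne_top fun i => (ht i).ne',
    ← ofReal_norm, Complex.norm_real, Real.norm_of_nonneg (div_nonneg ha hP.le), abs_of_pos hP,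
    one_div, ENNReal.toReal_inv, ENNReal.toReal_ofReal hp.le, ← mul_assoc, ← one_div,
    ofReal_div_prod_mul_ofReal_prod_rpow ha ht]

end Orthant

theorem hausdorff_multi_Lp_bound_general (n : ℕ) (p : ℝ) (hp : 1 ≤ p) (φ : (Fin n → ℝ) → ℝ)
    (hφ : ∀ t ∈ {t : Fin n → ℝ | ∀ i, 0 < t i}, 0 ≤ φ t)
    (hint : IntegrableOn (fun t : Fin n → ℝ => φ t / ∏ i, t i ^ (1 - 1 / p))
      {t : Fin n → ℝ | ∀ i, 0 < t i})
    (f : (Fin n → ℝ) → ℂ) (hf : MemLp f (ENNReal.ofReal p)) :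
    eLpNorm (fun x : Fin n → ℝ => ∫ t in {t : Fin n → ℝ | ∀ i, 0 < t i},
        f (fun i => x i / t i) * ((φ t / ∏ i, t i : ℝ) : ℂ)) (ENNReal.ofReal p) volume ≤
      ENNReal.ofReal (∫ t in {t : Fin n → ℝ | ∀ i, 0 < t i}, φ t / ∏ i, t i ^ (1 - 1 / p)) *
        eLpNorm f (ENNReal.ofReal p) volume := by
  set S : Set (Fin n → ℝ) := {t | ∀ i, 0 < t i}
  have hmem : ∀ᵐ t ∂volume.restrict S, t ∈ S := ae_restrict_mem measurableSet_setOf_forall_pos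
  have hintegrand : AEStronglyMeasurable (fun z : (Fin n → ℝ) × (Fin n → ℝ) =>
      f (fun i => z.1 i / z.2 i) * ((φ z.2 / ∏ i, z.2 i : ℝ) : ℂ))
      (volume.prod (volume.restrict S)) :=
    (aestronglyMeasurable_comp_div_pi_prod hf.1 (hmem.mono fun t ht i => (ht i).ne')).mul
      (Complex.continuous_ofReal.comp_aestronglyMeasurable
        (aestronglyMeasurable_div_prod_of_div_prod_rpow hint.aestronglyMeasurable)).comp_snd
  calc _ ≤ ∫⁻ t in S, eLpNorm (fun x : Fin n → ℝ => f (fun i => x i / t i) *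
          ((φ t / ∏ i, t i : ℝ) : ℂ)) (ENNReal.ofReal p) volume :=
        eLpNorm_integral_le (F := fun z : (Fin n → ℝ) × (Fin n → ℝ) =>
          f (fun i => z.1 i / z.2 i) * ((φ z.2 / ∏ i, z.2 i : ℝ) : ℂ))
          (ENNReal.one_le_ofReal.2 hp) ENNReal.ofReal_ne_top hintegrand
    _ = ∫⁻ t in S, ENNReal.ofReal (φ t / ∏ i, t i ^ (1 - 1 / p)) *
          eLpNorm f (ENNReal.ofReal p) volume :=
        setLIntegral_congr_fun measurableSet_setOf_forall_pos fun t ht =>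
          eLpNorm_comp_div_pi_mul_ofReal hf.1 (zero_lt_one.trans_le hp) (hφ t ht) ht
    _ = _ := by
      rw [lintegral_mul_const' _ _ hf.eLpNorm_ne_top, ofReal_integral_eq_lintegral_ofReal hint]
      filter_upwards [hmem] with t ht
      exact div_nonneg (hφ t ht) (Finset.prod_nonneg fun i _ => Real.rpow_nonneg (ht i).le _)

/-- For p ∈ [1,∞) and φ ≥ 0 locally integrable on (0,∞)ⁿ with
∫_{(0,∞)ⁿ} φ(t) ∏ tⱼ^{-(1-1/p)} dt < ∞, for every f ∈ L^p(ℝⁿ),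
‖H_φ f‖_p ≤ (∫_{(0,∞)ⁿ} φ(t) ∏ tⱼ^{-(1-1/p)} dt) ‖f‖_p. -/
theorem hausdorff_multi_Lp_bound (n : ℕ) (p : ℝ) (hp : 1 ≤ p) (φ : (Fin n → ℝ) → ℝ)
    (hφ : ∀ t ∈ {t : Fin n → ℝ | ∀ i, 0 < t i}, 0 ≤ φ t)
    (hloc : LocallyIntegrableOn φ {t : Fin n → ℝ | ∀ i, 0 < t i})
    (hint : IntegrableOn (fun t : Fin n → ℝ => φ t / ∏ i, t i ^ (1 - 1 / p))
      {t : Fin n → ℝ | ∀ i, 0 < t i})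
    (f : (Fin n → ℝ) → ℂ) (hf : MemLp f (ENNReal.ofReal p)) :
    eLpNorm (fun x : Fin n → ℝ => ∫ t in {t : Fin n → ℝ | ∀ i, 0 < t i},
        f (fun i => x i / t i) * ((φ t / ∏ i, t i : ℝ) : ℂ)) (ENNReal.ofReal p) volume ≤
      ENNReal.ofReal (∫ t in {t : Fin n → ℝ | ∀ i, 0 < t i}, φ t / ∏ i, t i ^ (1 - 1 / p)) *
        eLpNorm f (ENNReal.ofReal p) volume :=
  hausdorff_multi_Lp_bound_general n p hp φ hφ hint f hf
end

section
/- Let φ be a nonnegative locally integrable function on (0,∞) with ∫₀^∞ φ(t) dt < ∞, and let Φ ∈ C_c^∞(ℝ). Then for every f ∈ L¹(ℝ) and every x ∈ ℝ, the smooth maximal function satisfies the pointwise bound M_Φ(H_φ f)(x) ≤ H_φ(M_Φ f)(x), where M_Φ g(x) = sup_{r>0} |g * Φ_r(x)| with Φ_r(u) = r⁻¹Φ(u/r). -/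
set_option maxHeartbeats 1000000

open MeasureTheory Set

/-- If φ ≥ 0 is locally integrable on (0,∞) with ∫₀^∞ φ < ∞ and Φ ∈ C_c^∞(ℝ),
then for every f ∈ L¹(ℝ) and every x, M_Φ(H_φ f)(x) ≤ H_φ(M_Φ f)(x), where
M_Φ g(x) = sup_{r>0} |g * Φ_r(x)|, Φ_r(u) = r⁻¹ Φ(u/r). -/
theorem maximal_hausdorff_pointwise (φ : ℝ → ℝ) (hφ : ∀ t ∈ Ioi (0:ℝ), 0 ≤ φ t)
    (hloc : LocallyIntegrableOn φ (Ioi 0))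
    (hint : IntegrableOn φ (Ioi 0))
    (Φ : ℝ → ℝ) (hΦ : ContDiff ℝ (⊤ : ℕ∞) Φ) (hΦc : HasCompactSupport Φ)
    (f : ℝ → ℂ) (hf : Integrable f) (x : ℝ) :
    (⨆ (r : ℝ) (_ : 0 < r), ENNReal.ofReal (Norm.norm
        (∫ u : ℝ, (∫ t in Ioi (0:ℝ), f ((x - u) / t) * ((φ t / t : ℝ) : ℂ)) *
          ((Φ (u / r) / r : ℝ) : ℂ)))) ≤
      ∫⁻ t in Ioi (0:ℝ),
        (⨆ (r : ℝ) (_ : 0 < r), ENNReal.ofReal (Norm.norm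
          (∫ u : ℝ, f (x / t - u) * ((Φ (u / r) / r : ℝ) : ℂ)))) *
          ENNReal.ofReal (φ t / t) := by
  obtain ⟨M, hM⟩ : ∃ M, ∀ u, ‖Φ u‖ ≤ M := hΦc.exists_bound_of_continuous hΦ.continuous
  have hM0 : 0 ≤ M := le_trans (norm_nonneg _) (hM 0)
  set ν := (volume : Measure ℝ).restrict (Ioi 0) with hνdef
  refine iSup_le fun r => iSup_le fun hr => ?_
  -- the map (t, u) ↦ (x - u) / t is quasi measure preserving
  have hm_meas : Measurable (fun p : ℝ × ℝ => (x - p.2) / p.1) :=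
    (measurable_const.sub measurable_snd).div measurable_fst
  have hqmp : Measure.QuasiMeasurePreserving (fun p : ℝ × ℝ => (x - p.2) / p.1)
      (ν.prod volume) volume := by
    refine ⟨hm_meas, Measure.AbsolutelyContinuous.mk fun s hs h0 => ?_⟩
    rw [Measure.map_apply hm_meas hs, hνdef, Measure.measure_prod_null (hm_meas hs)]
    filter_upwards [self_mem_ae_restrict measurableSet_Ioi] with t ht
    have ht0 : (0:ℝ) < t := ht
    have h2 : (Prod.mk t ⁻¹' ((fun p : ℝ × ℝ => (x - p.2) / p.1) ⁻¹' s)) =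
        (fun u : ℝ => -u) ⁻¹' ((fun y : ℝ => x + y) ⁻¹' ((fun y : ℝ => y * t⁻¹) ⁻¹' s)) := by
      ext u; simp [div_eq_mul_inv, sub_eq_add_neg]
    have h1 : volume ((fun y : ℝ => y * t⁻¹) ⁻¹' s) = 0 := by
      rw [Real.volume_preimage_mul_right (inv_ne_zero ht0.ne')]
      simp [h0]
    simp only [Pi.zero_apply]
    rw [h2, show (fun u:ℝ => -u) = Neg.neg from rfl, Measure.measure_preimage_neg,
      measure_preimage_add, h1]
  -- measurability of the big integrand
  have hc_meas : AEStronglyMeasurable (fun t : ℝ => ((φ t / t : ℝ) : ℂ)) ν := by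
    have h1 : AEMeasurable (fun t : ℝ => φ t / t) ν := hint.aemeasurable.div aemeasurable_id
    exact (Complex.measurable_ofReal.comp_aemeasurable h1).aestronglyMeasurable
  have hΦr_cont : Continuous fun u : ℝ => ((Φ (u / r) / r : ℝ) : ℂ) :=
    Complex.continuous_ofReal.comp ((hΦ.continuous.comp (continuous_id.div_const r)).div_const r)
  have hΦr_bdd : ∀ u : ℝ, ‖((Φ (u / r) / r : ℝ) : ℂ)‖ ≤ M / r := by
    intro u
    rw [Complex.norm_real, Real.norm_eq_abs, abs_div, abs_of_pos hr]
    exact div_le_div₀ hM0 ((Real.norm_eq_abs _) ▸ hM (u / r)) hr le_rfl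
  set G : ℝ × ℝ → ℂ :=
    fun p => f ((x - p.2) / p.1) * ((φ p.1 / p.1 : ℝ) : ℂ) * ((Φ (p.2 / r) / r : ℝ) : ℂ)
    with hG
  have hG_meas : AEStronglyMeasurable G (ν.prod volume) := by
    refine ((hf.1.comp_quasiMeasurePreserving hqmp).mul
      (hc_meas.comp_quasiMeasurePreserving Measure.quasiMeasurePreserving_fst)).mul ?_
    exact (hΦr_cont.comp continuous_snd).aestronglyMeasurable
  -- slice integrability
  have hslice : ∀ t : ℝ, 0 < t → Integrable (fun u => f ((x - u) / t)) volume := by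
    intro t ht
    have h1 : Integrable (fun y : ℝ => f (y / t)) volume := hf.comp_div ht.ne'
    exact h1.comp_sub_left x
  have hsliceG : ∀ t : ℝ, 0 < t → Integrable (fun u => G (t, u)) volume := by
    intro t ht
    have h1 : Integrable
        (fun u : ℝ => ((Φ (u / r) / r : ℝ) : ℂ) * (f ((x - u) / t) * ((φ t / t : ℝ) : ℂ)))
        volume :=
      Integrable.bdd_mul ((hslice t ht).mul_const _)
        hΦr_cont.aestronglyMeasurable (Filter.Eventually.of_forall hΦr_bdd)
    have h2 : (fun u => G (t, u)) =
        fun u => ((Φ (u / r) / r : ℝ) : ℂ) * (f ((x - u) / t) * ((φ t / t : ℝ) : ℂ)) := by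
      funext u; simp only [hG]; ring
    rwa [h2]
  -- change of variables for the norm integral
  have hnormcv : ∀ t : ℝ, 0 < t →
      (∫ u : ℝ, ‖f ((x - u) / t)‖) = t * ∫ u, ‖f u‖ := by
    intro t ht
    have h1 : (∫ u : ℝ, ‖f ((x - u) / t)‖) = ∫ y : ℝ, ‖f (y / t)‖ := by
      have := integral_sub_left_eq_self (fun y : ℝ => ‖f (y / t)‖) (volume : Measure ℝ) x
      simpa using this
    rw [h1, Measure.integral_comp_div (fun y => ‖f y‖) t, abs_of_pos ht, smul_eq_mul]
  -- integrability on the product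
  have hGint : Integrable G (ν.prod volume) := by
    rw [integrable_prod_iff hG_meas]
    constructor
    · filter_upwards [self_mem_ae_restrict measurableSet_Ioi] with t ht
      exact hsliceG t ht
    · refine Integrable.mono' (hint.const_mul (M / r * ∫ u, ‖f u‖))
        (hG_meas.norm.integral_prod_right') ?_
      filter_upwards [self_mem_ae_restrict measurableSet_Ioi] with t ht
      have ht0 : (0:ℝ) < t := ht
      have hφt : 0 ≤ φ t / t := div_nonneg (hφ t ht) ht0.le
      have key : (∫ u, ‖G (t, u)‖) ≤ M / r * (∫ u, ‖f u‖) * φ t := by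
        have hle : ∀ u : ℝ, ‖G (t, u)‖ ≤ ‖f ((x - u) / t)‖ * (φ t / t * (M / r)) := by
          intro u
          simp only [hG, norm_mul]
          rw [mul_assoc]
          refine mul_le_mul_of_nonneg_left ?_ (norm_nonneg _)
          have e1 : ‖((φ t / t : ℝ) : ℂ)‖ = φ t / t := by
            rw [Complex.norm_real, Real.norm_eq_abs, abs_of_nonneg hφt]
          rw [e1]
          exact mul_le_mul_of_nonneg_left (hΦr_bdd u) hφt
        have hInt2 : Integrable (fun u : ℝ => ‖f ((x - u) / t)‖ * (φ t / t * (M / r)))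
            volume := (hslice t ht0).norm.mul_const _
        calc (∫ u, ‖G (t, u)‖)
            ≤ ∫ u : ℝ, ‖f ((x - u) / t)‖ * (φ t / t * (M / r)) :=
              integral_mono_of_nonneg (Filter.Eventually.of_forall fun u => norm_nonneg _)
                hInt2 (Filter.Eventually.of_forall hle)
          _ = (t * ∫ u, ‖f u‖) * (φ t / t * (M / r)) := by
              rw [integral_mul_const, hnormcv t ht0]
          _ = M / r * (∫ u, ‖f u‖) * φ t := by
              field_simp
      calc ‖∫ u, ‖G (t, u)‖‖ = ∫ u, ‖G (t, u)‖ := by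
            rw [Real.norm_eq_abs, abs_of_nonneg (integral_nonneg fun u => norm_nonneg _)]
        _ ≤ M / r * (∫ u, ‖f u‖) * φ t := key
  -- Fubini
  have hswap := integral_integral_swap (f := fun t u => G (t, u)) hGint
  have e3 : (∫ u : ℝ, (∫ t in Ioi (0:ℝ), f ((x - u) / t) * ((φ t / t : ℝ) : ℂ)) *
      ((Φ (u / r) / r : ℝ) : ℂ)) = ∫ t in Ioi (0:ℝ), ∫ u : ℝ, G (t, u) := by
    rw [hswap]
    congr 1
    funext u
    exact (integral_mul_const _ _).symm
  -- change of variables in the inner integral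
  have e4 : ∀ t ∈ Ioi (0:ℝ), (∫ u : ℝ, G (t, u)) =
      (∫ v : ℝ, f (x / t - v) * ((Φ (v / (r / t)) / (r / t) : ℝ) : ℂ)) *
        ((φ t / t : ℝ) : ℂ) := by
    intro t ht
    have ht0 : (0:ℝ) < t := ht
    set h : ℝ → ℂ := fun u => f ((x - u) / t) * ((Φ (u / r) / r : ℝ) : ℂ) with hh
    have e1 : (∫ v : ℝ, h (t * v)) = |t⁻¹| • ∫ u, h u := Measure.integral_comp_mul_left h t
    have e2 : (∫ u, h u) = t • ∫ v : ℝ, h (t * v) := by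
      rw [e1, smul_smul, abs_of_pos (inv_pos.2 ht0), mul_inv_cancel₀ ht0.ne', one_smul]
    have e5 : (∫ u : ℝ, G (t, u)) = (∫ u, h u) * ((φ t / t : ℝ) : ℂ) := by
      rw [← integral_mul_const]
      congr 1; funext u; simp only [hG, hh]; ring
    rw [e5, e2, ← integral_smul]
    congr 1
    congr 1
    funext v
    have hx : (x - t * v) / t = x / t - v := by field_simp
    have hΦeq : t • ((Φ (t * v / r) / r : ℝ) : ℂ) = ((Φ (v / (r / t)) / (r / t) : ℝ) : ℂ) := by
      have h1 : v / (r / t) = t * v / r := by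
        rw [div_div_eq_mul_div]; ring
      have h2 : (t : ℝ) * (Φ (t * v / r) / r) = Φ (t * v / r) / (r / t) := by
        field_simp
      rw [h1, Complex.real_smul, ← Complex.ofReal_mul, h2]
    simp only [hh, hx]
    rw [← hΦeq]
    exact (mul_smul_comm t _ _).symm
  have e6 : (∫ t in Ioi (0:ℝ), ∫ u : ℝ, G (t, u)) =
      ∫ t in Ioi (0:ℝ),
        (∫ v : ℝ, f (x / t - v) * ((Φ (v / (r / t)) / (r / t) : ℝ) : ℂ)) *
          ((φ t / t : ℝ) : ℂ) :=
    setIntegral_congr_fun measurableSet_Ioi e4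
  rw [e3, e6]
  calc ENNReal.ofReal (Norm.norm (∫ t in Ioi (0:ℝ),
        (∫ v : ℝ, f (x / t - v) * ((Φ (v / (r / t)) / (r / t) : ℝ) : ℂ)) *
          ((φ t / t : ℝ) : ℂ)))
      = (‖∫ t in Ioi (0:ℝ),
          (∫ v : ℝ, f (x / t - v) * ((Φ (v / (r / t)) / (r / t) : ℝ) : ℂ)) *
            ((φ t / t : ℝ) : ℂ)‖₊ : ENNReal) := by
        rw [← ENNReal.ofReal_coe_nnreal, coe_nnnorm]
    _ ≤ ∫⁻ t in Ioi (0:ℝ),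
          ‖(∫ v : ℝ, f (x / t - v) * ((Φ (v / (r / t)) / (r / t) : ℝ) : ℂ)) *
            ((φ t / t : ℝ) : ℂ)‖₊ := enorm_integral_le_lintegral_enorm _
    _ ≤ ∫⁻ t in Ioi (0:ℝ),
          (⨆ (r' : ℝ) (_ : 0 < r'), ENNReal.ofReal (Norm.norm
            (∫ u : ℝ, f (x / t - u) * ((Φ (u / r') / r' : ℝ) : ℂ)))) *
            ENNReal.ofReal (φ t / t) := by
        refine lintegral_mono_ae ?_
        filter_upwards [self_mem_ae_restrict measurableSet_Ioi] with t ht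
        have ht0 : (0:ℝ) < t := ht
        have hφt : 0 ≤ φ t / t := div_nonneg (hφ t ht) ht0.le
        have h1 : (‖(∫ v : ℝ, f (x / t - v) * ((Φ (v / (r / t)) / (r / t) : ℝ) : ℂ)) *
              ((φ t / t : ℝ) : ℂ)‖₊ : ENNReal)
            = ENNReal.ofReal (Norm.norm
                (∫ v : ℝ, f (x / t - v) * ((Φ (v / (r / t)) / (r / t) : ℝ) : ℂ))) *
              ENNReal.ofReal (φ t / t) := by
          rw [← ENNReal.ofReal_coe_nnreal, coe_nnnorm, norm_mul, Complex.norm_real, Real.norm_eq_abs,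
            abs_of_nonneg hφt, ENNReal.ofReal_mul (norm_nonneg _)]
        rw [h1]
        exact mul_le_mul_left
          (le_iSup₂ (f := fun (r' : ℝ) (_ : 0 < r') => ENNReal.ofReal (Norm.norm
            (∫ u : ℝ, f (x / t - u) * ((Φ (u / r') / r' : ℝ) : ℂ)))) (r / t)
            (div_pos hr ht0)) _
end

section
/- Let φ be a nonnegative locally integrable function on (0,∞)² such that H_φ maps the two-parameter Hardy space H¹(ℝ×ℝ) boundedly into L¹(ℝ²). Then ∫₀^∞∫₀^∞ φ(t₁,t₂) dt₁ dt₂ < ∞. The proof applies H_φ to the tensor product g(x₁,x₂) = f(x₁)f(x₂) with f(x) = x/(1+x²)², which lies in H¹(ℝ×ℝ), and uses that H_φ g(x₁,x₂) ≥ 0 for x₁,x₂ ≥ 0 together with Tonelli's theorem on [0,∞)² to evaluate ∫_{[0,∞)²} H_φ g = (∫₀^∞ y(1+y²)^{-2} dy)² ∫∫ φ. -/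
open MeasureTheory Set Filter
open scoped ENNReal

noncomputable def ff (x : ℝ) : ℝ :=
  if x ∈ Icc (1:ℝ) 2 then 1 else if x ∈ Icc (-2:ℝ) (-1) then -1 else 0

lemma ff_eq : ff = fun x => (Icc (1:ℝ) 2).indicator (fun _ => (1:ℝ)) x
    - (Icc (-2:ℝ) (-1)).indicator (fun _ => (1:ℝ)) x := by
  funext x
  by_cases h1 : x ∈ Icc (1:ℝ) 2
  · have h2 : x ∉ Icc (-2:ℝ) (-1) := fun hx => by
      simp only [mem_Icc] at h1 hx; linarith
    simp [ff, h1, h2]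
  · by_cases h2 : x ∈ Icc (-2:ℝ) (-1) <;> simp [ff, h1, h2]

lemma measurable_ff : Measurable ff := by
  unfold ff
  exact Measurable.ite measurableSet_Icc measurable_const
    (Measurable.ite measurableSet_Icc measurable_const measurable_const)

lemma ff_abs_le (x : ℝ) : |ff x| ≤ 1 := by
  unfold ff; split_ifs <;> norm_num

lemma ff_zero {x : ℝ} (h : 2 < |x|) : ff x = 0 := by
  rcases lt_or_ge x 0 with hx | hx
  · rw [abs_of_neg hx] at h
    unfold ff
    rw [if_neg, if_neg]
    · rintro ⟨h1, _⟩; linarith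
    · rintro ⟨h1, _⟩; linarith
  · rw [abs_of_nonneg hx] at h
    unfold ff
    rw [if_neg, if_neg]
    · rintro ⟨_, h2⟩; linarith
    · rintro ⟨_, h2⟩; linarith

lemma ff_nonneg {x : ℝ} (hx : 0 < x) : 0 ≤ ff x := by
  unfold ff; split_ifs with h1 h2
  · norm_num
  · exfalso; rcases h2 with ⟨_, h2⟩; linarith
  · exact le_refl _

lemma ff_le_one (x : ℝ) : ff x ≤ 1 := by
  unfold ff; split_ifs <;> norm_num

lemma indicator_Icc_integrable (a b : ℝ) :
    Integrable ((Icc a b).indicator fun _ => (1:ℝ)) := by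
  rw [integrable_indicator_iff measurableSet_Icc]
  exact integrableOn_const measure_Icc_lt_top.ne

lemma integrable_ff : Integrable ff := by
  rw [ff_eq]
  exact (indicator_Icc_integrable 1 2).sub (indicator_Icc_integrable (-2) (-1))

lemma integral_ff : ∫ x, ff x = 0 := by
  rw [ff_eq]
  rw [integral_sub (indicator_Icc_integrable 1 2) (indicator_Icc_integrable (-2) (-1))]
  rw [integral_indicator_const (1:ℝ) measurableSet_Icc,
    integral_indicator_const (1:ℝ) measurableSet_Icc]
  simp [Real.volume_Icc]
  norm_num

lemma ff_div_mem {x t : ℝ} (hx : 0 < x) (ht : 0 < t) (h : ff (x / t) ≠ 0) :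
    t ∈ Icc (x / 2) x := by
  have hpos : 0 < x / t := div_pos hx ht
  have hmem : x / t ∈ Icc (1:ℝ) 2 := by
    by_contra hm
    have hm2 : x / t ∉ Icc (-2:ℝ) (-1) := fun ⟨_, h2⟩ => by
      have := hpos; linarith
    unfold ff at h; rw [if_neg hm, if_neg hm2] at h; exact h rfl
  rcases hmem with ⟨h1, h2⟩
  constructor
  · rw [div_le_iff₀ (by norm_num : (0:ℝ) < 2)]
    rw [div_le_iff₀ ht] at h2; linarith
  · rw [le_div_iff₀ ht] at h1; linarith

lemma ff_div_indicator {t x : ℝ} (ht : 0 < t) (hx : 0 < x) :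
    ff (x / t) = (Icc t (2*t)).indicator (fun _ => (1:ℝ)) x := by
  by_cases hm : x / t ∈ Icc (1:ℝ) 2
  · have hx' : x ∈ Icc t (2*t) := by
      rcases hm with ⟨h1, h2⟩
      rw [le_div_iff₀ ht] at h1; rw [div_le_iff₀ ht] at h2
      constructor <;> linarith
    have hm2 : x / t ∉ Icc (-2:ℝ) (-1) := fun ⟨_, h2⟩ => by
      have := div_pos hx ht; linarith
    unfold ff; rw [if_pos hm]; rw [indicator_of_mem hx']
  · have hx' : x ∉ Icc t (2*t) := fun ⟨h1, h2⟩ => by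
      apply hm
      constructor
      · rw [le_div_iff₀ ht]; linarith
      · rw [div_le_iff₀ ht]; linarith
    have hm2 : x / t ∉ Icc (-2:ℝ) (-1) := fun ⟨_, h2⟩ => by
      have := div_pos hx ht; linarith
    unfold ff; rw [if_neg hm, if_neg hm2, indicator_of_notMem hx']

lemma lint_ff {s : ℝ} (hs : 0 < s) :
    ∫⁻ x in Ioi (0:ℝ), ENNReal.ofReal (ff (x / s)) = ENNReal.ofReal s := by
  rw [setLIntegral_congr_fun measurableSet_Ioi
    (fun x (hx : x ∈ Ioi (0:ℝ)) => ?_)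
    (g := fun x => (Icc s (2*s)).indicator (fun _ => (1:ℝ≥0∞)) x)]
  · rw [lintegral_indicator measurableSet_Icc]
    simp only [lintegral_const, Measure.restrict_restrict measurableSet_Icc,
      Measure.restrict_apply MeasurableSet.univ, univ_inter]
    have : Icc s (2*s) ∩ Ioi 0 = Icc s (2*s) := by
      apply inter_eq_left.mpr
      intro y ⟨h1, _⟩
      exact lt_of_lt_of_le hs h1
    rw [this, Real.volume_Icc, one_mul]
    congr 1; ring
  · rw [ff_div_indicator hs hx]
    by_cases hxm : x ∈ Icc s (2*s) <;> simp [hxm]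

lemma maximal_bound (Φ : ℝ → ℝ) (hΦ : ContDiff ℝ (⊤ : ℕ∞) Φ) (hc : HasCompactSupport Φ) :
    ∃ D : ℝ, 0 ≤ D ∧
      ∀ x t : ℝ, 0 < t → |∫ u, ff (x - u) * (Φ (u / t) / t)| ≤ D / (1 + x ^ 2) := by
  -- Lipschitz constant
  have hder : Continuous (deriv Φ) := hΦ.continuous_deriv (by simp)
  have hdc : HasCompactSupport (deriv Φ) := hc.deriv
  obtain ⟨L, hL0⟩ := hdc.exists_bound_of_continuous hder
  have hL0' : 0 ≤ L := le_trans (norm_nonneg _) (hL0 0)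
  have hdiff : Differentiable ℝ Φ := hΦ.differentiable (by simp)
  have hlip : ∀ a b : ℝ, |Φ a - Φ b| ≤ L * |a - b| := by
    intro a b
    have hw := lipschitzWith_of_nnnorm_deriv_le (C := L.toNNReal) hdiff (fun x => by
      rw [← NNReal.coe_le_coe, coe_nnnorm, Real.coe_toNNReal']
      exact le_trans (hL0 x) (le_max_left _ _))
    have h2 := hw.dist_le_mul a b
    rw [Real.dist_eq, Real.dist_eq] at h2
    calc |Φ a - Φ b| ≤ L.toNNReal * |a - b| := h2
    _ ≤ L * |a - b| := by
        apply mul_le_mul_of_nonneg_right _ (abs_nonneg _)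
        rw [Real.coe_toNNReal']
        exact max_le le_rfl hL0'
  -- support radius
  obtain ⟨r, hr⟩ := hc.isBounded.subset_closedBall 0
  set R : ℝ := max r 1 with hRdef
  have hR1 : (1:ℝ) ≤ R := le_max_right _ _
  have hR0 : (0:ℝ) < R := lt_of_lt_of_le one_pos hR1
  have hsupp : ∀ y : ℝ, Φ y ≠ 0 → |y| ≤ R := by
    intro y hy
    have h1 : y ∈ tsupport Φ := subset_tsupport Φ (by simpa using hy)
    have h2 := hr h1
    rw [Metric.mem_closedBall, Real.dist_eq, sub_zero] at h2
    exact le_trans h2 (le_max_left _ _)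
  -- L¹ norm of Φ
  have hΦcont : Continuous Φ := hΦ.continuous
  have hΦint : Integrable Φ := hΦcont.integrable_of_hasCompactSupport hc
  set I : ℝ := ∫ u, |Φ u| with hIdef
  have hI0 : 0 ≤ I := integral_nonneg fun u => abs_nonneg _
  -- Bound 1
  have bound1 : ∀ x t : ℝ, 0 < t → |∫ u, ff (x - u) * (Φ (u / t) / t)| ≤ I := by
    intro x t ht
    have hint : Integrable fun u : ℝ => |Φ (u / t)| / t :=
      (hΦint.abs.comp_div ht.ne').div_const t
    calc |∫ u, ff (x - u) * (Φ (u / t) / t)|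
        = ‖∫ u, ff (x - u) * (Φ (u / t) / t)‖ := (Real.norm_eq_abs _).symm
      _ ≤ ∫ u, ‖ff (x - u) * (Φ (u / t) / t)‖ := norm_integral_le_integral_norm _
      _ ≤ ∫ u, |Φ (u / t)| / t := by
          apply integral_mono_of_nonneg (Filter.Eventually.of_forall fun u => norm_nonneg _)
            hint (Filter.Eventually.of_forall fun u => ?_)
          show ‖ff (x - u) * (Φ (u / t) / t)‖ ≤ |Φ (u / t)| / t
          rw [Real.norm_eq_abs, abs_mul, abs_div, abs_of_pos ht]
          calc |ff (x - u)| * (|Φ (u / t)| / t) ≤ 1 * (|Φ (u / t)| / t) := by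
                apply mul_le_mul_of_nonneg_right (ff_abs_le _)
                positivity
            _ = |Φ (u / t)| / t := one_mul _
      _ = I := by
          rw [integral_div, Measure.integral_comp_div (fun u => |Φ u|) t,
            abs_of_pos ht, smul_eq_mul, mul_comm, mul_div_assoc, div_self ht.ne', mul_one]
  -- Bound 2 (cancellation)
  have bound2 : ∀ x t : ℝ, 0 < t → |∫ u, ff (x - u) * (Φ (u / t) / t)| ≤ 8 * L / t ^ 2 := by
    intro x t ht
    have hint1 : Integrable fun u : ℝ => ff (x - u) * (Φ (u / t) / t) := by
      apply Integrable.bdd_mul (c := 1) ((hΦint.comp_div ht.ne').div_const t)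
      · exact (measurable_ff.comp (measurable_const.sub measurable_id)).aestronglyMeasurable
      · exact Eventually.of_forall fun u => by simpa using ff_abs_le (x - u)
    have hint2 : Integrable fun u : ℝ => ff (x - u) * (Φ (x / t) / t) :=
      (integrable_ff.comp_sub_left x).mul_const _
    have hzero : (∫ u, ff (x - u) * (Φ (x / t) / t)) = 0 := by
      rw [integral_mul_const, integral_sub_left_eq_self ff volume x, integral_ff, zero_mul]
    have hsplit : (∫ u, ff (x - u) * (Φ (u / t) / t))
        = ∫ u, ff (x - u) * ((Φ (u / t) - Φ (x / t)) / t) := by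
      rw [← sub_zero (∫ u, ff (x - u) * (Φ (u / t) / t)), ← hzero, ← integral_sub hint1 hint2]
      congr 1 with u; ring
    rw [hsplit]
    have hdom : Integrable ((Icc (x - 2) (x + 2)).indicator fun _ => 2 * L / t ^ 2) := by
      rw [integrable_indicator_iff measurableSet_Icc]
      exact integrableOn_const measure_Icc_lt_top.ne
    calc |∫ u, ff (x - u) * ((Φ (u / t) - Φ (x / t)) / t)|
        = ‖∫ u, ff (x - u) * ((Φ (u / t) - Φ (x / t)) / t)‖ := (Real.norm_eq_abs _).symm
      _ ≤ ∫ u, ‖ff (x - u) * ((Φ (u / t) - Φ (x / t)) / t)‖ := norm_integral_le_integral_norm _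
      _ ≤ ∫ u, (Icc (x - 2) (x + 2)).indicator (fun _ => 2 * L / t ^ 2) u := by
          apply integral_mono_of_nonneg (Filter.Eventually.of_forall fun u => norm_nonneg _)
            hdom (Filter.Eventually.of_forall fun u => ?_)
          show ‖ff (x - u) * ((Φ (u / t) - Φ (x / t)) / t)‖
            ≤ (Icc (x - 2) (x + 2)).indicator (fun _ => 2 * L / t ^ 2) u
          by_cases hu : u ∈ Icc (x - 2) (x + 2)
          · rw [indicator_of_mem hu]
            rcases hu with ⟨hu1, hu2⟩
            have habs : |u - x| ≤ 2 := abs_le.2 ⟨by linarith, by linarith⟩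
            have heq : |u / t - x / t| = |u - x| / t := by
              rw [div_sub_div_same, abs_div, abs_of_pos ht]
            have h1 : |Φ (u / t) - Φ (x / t)| ≤ L * (2 / t) := by
              calc |Φ (u / t) - Φ (x / t)| ≤ L * |u / t - x / t| := hlip _ _
                _ = L * (|u - x| / t) := by rw [heq]
                _ ≤ L * (2 / t) := by gcongr
            rw [Real.norm_eq_abs, abs_mul, abs_div, abs_of_pos ht]
            calc |ff (x - u)| * (|Φ (u / t) - Φ (x / t)| / t)
                ≤ 1 * ((L * (2 / t)) / t) := by
                  apply mul_le_mul (ff_abs_le _) (by gcongr) (by positivity) zero_le_one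
              _ = 2 * L / t ^ 2 := by ring
          · rw [indicator_of_notMem hu]
            have hz : ff (x - u) = 0 := by
              apply ff_zero
              rw [mem_Icc, not_and_or] at hu
              rcases hu with h | h
              · push_neg at h; rw [abs_of_pos (by linarith)]; linarith
              · push_neg at h; rw [abs_of_neg (by linarith)]; linarith
            simp [hz]
      _ = 8 * L / t ^ 2 := by
          rw [integral_indicator_const _ measurableSet_Icc, measureReal_def, Real.volume_Icc]
          rw [show x + 2 - (x - 2) = (4:ℝ) by ring, ENNReal.toReal_ofReal (by norm_num),
            smul_eq_mul]
          ring
  -- vanishing for small t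
  have vanish : ∀ x t : ℝ, 0 < t → R * t < |x| - 2 →
      (∫ u, ff (x - u) * (Φ (u / t) / t)) = 0 := by
    intro x t ht hRt
    have hz : ∀ u : ℝ, ff (x - u) * (Φ (u / t) / t) = 0 := by
      intro u
      by_cases hΦu : Φ (u / t) = 0
      · rw [hΦu]; ring
      · have h1 : |u / t| ≤ R := hsupp _ hΦu
        have h2 : |u| ≤ R * t := by
          rw [abs_div, abs_of_pos ht, div_le_iff₀ ht] at h1
          exact h1
        have h3 : 2 < |x - u| := by
          have := abs_sub_abs_le_abs_sub x u
          linarith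
        rw [ff_zero h3]; ring
    simp [hz]
  -- combine
  refine ⟨max (17 * I) (64 * L * R ^ 2), le_max_of_le_left (by linarith), ?_⟩
  intro x t ht
  set D := max (17 * I) (64 * L * R ^ 2) with hD
  have hD0 : 0 ≤ D := le_max_of_le_left (by linarith)
  have hx2 : (0:ℝ) < 1 + x ^ 2 := by positivity
  by_cases hx : |x| ≤ 4
  · have h17 : 1 + x ^ 2 ≤ 17 := by nlinarith [abs_nonneg x, sq_abs x]
    calc |∫ u, ff (x - u) * (Φ (u / t) / t)| ≤ I := bound1 x t ht
      _ = 17 * I / 17 := by ring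
      _ ≤ D / 17 := by gcongr; exact le_max_left _ _
      _ ≤ D / (1 + x ^ 2) := by gcongr
  · push_neg at hx
    by_cases hRt : R * t < |x| - 2
    · rw [vanish x t ht hRt]
      simp only [abs_zero]
      positivity
    · push_neg at hRt
      have ht2 : |x| / (2 * R) ≤ t := by
        rw [div_le_iff₀ (by positivity)]
        nlinarith
      have hx0 : (0:ℝ) < |x| := by linarith
      have ht2' : x ^ 2 / (4 * R ^ 2) ≤ t ^ 2 := by
        have hm := mul_self_le_mul_self (by positivity : (0:ℝ) ≤ |x| / (2 * R)) ht2
        calc x ^ 2 / (4 * R ^ 2) = (|x| / (2 * R)) * (|x| / (2 * R)) := by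
              rw [div_mul_div_comm, ← sq_abs]; ring_nf
          _ ≤ t * t := hm
          _ = t ^ 2 := (sq t).symm
      calc |∫ u, ff (x - u) * (Φ (u / t) / t)| ≤ 8 * L / t ^ 2 := bound2 x t ht
        _ ≤ D / (1 + x ^ 2) := by
            rw [div_le_div_iff₀ (by positivity) hx2]
            have h64 : 64 * L * R ^ 2 ≤ D := le_max_right _ _
            have hxx : 16 < x ^ 2 := by nlinarith [sq_abs x]
            have hkey : 64 * L * R ^ 2 * (x ^ 2 / (4 * R ^ 2)) ≤ D * t ^ 2 :=
              mul_le_mul h64 ht2' (by positivity) hD0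
            have hkey2 : 64 * L * R ^ 2 * (x ^ 2 / (4 * R ^ 2)) = 16 * L * x ^ 2 := by
              field_simp
              ring
            nlinarith [mul_nonneg hL0' (by linarith : (0:ℝ) ≤ x ^ 2 - 1)]

lemma bound_int (D : ℝ) : Integrable (fun x : ℝ => D / (1 + x ^ 2)) := by
  simpa [div_eq_mul_inv] using integrable_inv_one_add_sq.const_mul D

set_option maxHeartbeats 1000000

/-- Let φ ≥ 0 be locally integrable on (0,∞)² and suppose H_φ maps the
two-parameter Hardy space H¹(ℝ×ℝ) (defined via the two-parameter smooth maximal function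
built from Φ¹, Φ² ∈ C_c^∞(ℝ) with ∫Φ¹ = ∫Φ² = 1) boundedly into L¹(ℝ²). Then
∫₀^∞∫₀^∞ φ(t₁,t₂) dt₁ dt₂ < ∞. -/
theorem hausdorff_two_param_necessary (φ : ℝ × ℝ → ℝ)
    (hφ : ∀ t ∈ (Ioi (0:ℝ)) ×ˢ (Ioi (0:ℝ)), 0 ≤ φ t)
    (hloc : LocallyIntegrableOn φ ((Ioi (0:ℝ)) ×ˢ (Ioi (0:ℝ))))
    (Φ₁ Φ₂ : ℝ → ℝ) (hΦ₁ : ContDiff ℝ (⊤ : ℕ∞) Φ₁) (hΦ₁c : HasCompactSupport Φ₁)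
    (hΦ₂ : ContDiff ℝ (⊤ : ℕ∞) Φ₂) (hΦ₂c : HasCompactSupport Φ₂)
    (hΦ₁i : (∫ u : ℝ, Φ₁ u) = 1) (hΦ₂i : (∫ u : ℝ, Φ₂ u) = 1)
    (C : ℝ) (hC : 0 ≤ C)
    (hbd : ∀ g : ℝ × ℝ → ℝ, Integrable g →
      (∫⁻ x : ℝ × ℝ, ⨆ (t₁ : ℝ) (_ : 0 < t₁) (t₂ : ℝ) (_ : 0 < t₂),
        ENNReal.ofReal |∫ u : ℝ × ℝ,
          g (x.1 - u.1, x.2 - u.2) * (Φ₁ (u.1 / t₁) / t₁) * (Φ₂ (u.2 / t₂) / t₂)|) < ⊤ →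
      (∫⁻ x : ℝ × ℝ, ENNReal.ofReal
          |∫ t in (Ioi (0:ℝ)) ×ˢ (Ioi (0:ℝ)),
            g (x.1 / t.1, x.2 / t.2) * (φ t / (t.1 * t.2))|) ≤
        ENNReal.ofReal C *
          ∫⁻ x : ℝ × ℝ, ⨆ (t₁ : ℝ) (_ : 0 < t₁) (t₂ : ℝ) (_ : 0 < t₂),
            ENNReal.ofReal |∫ u : ℝ × ℝ,
              g (x.1 - u.1, x.2 - u.2) * (Φ₁ (u.1 / t₁) / t₁) * (Φ₂ (u.2 / t₂) / t₂)|) :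
    (∫⁻ t in (Ioi (0:ℝ)) ×ˢ (Ioi (0:ℝ)), ENNReal.ofReal (φ t)) < ⊤ := by
  classical
  set Q : Set (ℝ × ℝ) := (Ioi (0:ℝ)) ×ˢ (Ioi (0:ℝ)) with hQdef
  have hQm : MeasurableSet Q := measurableSet_Ioi.prod measurableSet_Ioi
  set g : ℝ × ℝ → ℝ := fun p => ff p.1 * ff p.2 with hgdef
  have hg_int : Integrable g := by
    rw [hgdef, Measure.volume_eq_prod]
    exact integrable_ff.mul_prod integrable_ff
  obtain ⟨D₁, hD₁0, hD₁⟩ := maximal_bound Φ₁ hΦ₁ hΦ₁c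
  obtain ⟨D₂, hD₂0, hD₂⟩ := maximal_bound Φ₂ hΦ₂ hΦ₂c
  have hPint : Integrable (fun x : ℝ × ℝ => (D₁ / (1 + x.1 ^ 2)) * (D₂ / (1 + x.2 ^ 2))) := by
    rw [Measure.volume_eq_prod]
    exact (bound_int D₁).mul_prod (bound_int D₂)
  -- maximal function bound
  have hmax_le : ∀ x : ℝ × ℝ,
      (⨆ (t₁ : ℝ) (_ : 0 < t₁) (t₂ : ℝ) (_ : 0 < t₂),
        ENNReal.ofReal |∫ u : ℝ × ℝ,
          g (x.1 - u.1, x.2 - u.2) * (Φ₁ (u.1 / t₁) / t₁) * (Φ₂ (u.2 / t₂) / t₂)|)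
        ≤ ENNReal.ofReal ((D₁ / (1 + x.1 ^ 2)) * (D₂ / (1 + x.2 ^ 2))) := by
    intro x
    refine iSup_le fun t₁ => iSup_le fun ht₁ => iSup_le fun t₂ => iSup_le fun ht₂ => ?_
    have hfac : (∫ u : ℝ × ℝ,
          g (x.1 - u.1, x.2 - u.2) * (Φ₁ (u.1 / t₁) / t₁) * (Φ₂ (u.2 / t₂) / t₂))
        = (∫ u, ff (x.1 - u) * (Φ₁ (u / t₁) / t₁)) * (∫ u, ff (x.2 - u) * (Φ₂ (u / t₂) / t₂)) := by
      rw [Measure.volume_eq_prod, ← integral_prod_mul]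
      congr 1 with u
      show ff (x.1 - u.1) * ff (x.2 - u.2) * (Φ₁ (u.1 / t₁) / t₁) * (Φ₂ (u.2 / t₂) / t₂) = _
      ring
    rw [hfac, abs_mul]
    exact ENNReal.ofReal_le_ofReal
      (mul_le_mul (hD₁ _ _ ht₁) (hD₂ _ _ ht₂) (abs_nonneg _) (by positivity))
  have hmaxfin : (∫⁻ x : ℝ × ℝ, ⨆ (t₁ : ℝ) (_ : 0 < t₁) (t₂ : ℝ) (_ : 0 < t₂),
      ENNReal.ofReal |∫ u : ℝ × ℝ,
        g (x.1 - u.1, x.2 - u.2) * (Φ₁ (u.1 / t₁) / t₁) * (Φ₂ (u.2 / t₂) / t₂)|) < ⊤ :=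
    lt_of_le_of_lt (lintegral_mono hmax_le) hPint.lintegral_lt_top
  have hH : (∫⁻ x : ℝ × ℝ, ENNReal.ofReal
      |∫ t in Q, g (x.1 / t.1, x.2 / t.2) * (φ t / (t.1 * t.2))|) < ⊤ :=
    lt_of_le_of_lt (hbd g hg_int hmaxfin) (ENNReal.mul_lt_top ENNReal.ofReal_lt_top hmaxfin)
  -- nonnegativity on Q
  have hnn : ∀ x ∈ Q, ∀ t ∈ Q, 0 ≤ g (x.1 / t.1, x.2 / t.2) * (φ t / (t.1 * t.2)) := by
    rintro x ⟨hx1, hx2⟩ t ⟨ht1, ht2⟩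
    apply mul_nonneg
    · exact mul_nonneg (ff_nonneg (div_pos hx1 ht1)) (ff_nonneg (div_pos hx2 ht2))
    · exact div_nonneg (hφ t ⟨ht1, ht2⟩) (le_of_lt (mul_pos ht1 ht2))
  -- integrability on Q
  have E1 : ∀ x ∈ Q, IntegrableOn
      (fun t : ℝ × ℝ => g (x.1 / t.1, x.2 / t.2) * (φ t / (t.1 * t.2))) Q := by
    rintro x ⟨hx1, hx2⟩
    rw [mem_Ioi] at hx1 hx2
    set K : Set (ℝ × ℝ) := Icc (x.1 / 2) x.1 ×ˢ Icc (x.2 / 2) x.2 with hK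
    have hKc : IsCompact K := isCompact_Icc.prod isCompact_Icc
    have hKm : MeasurableSet K := measurableSet_Icc.prod measurableSet_Icc
    have hKQ : K ⊆ Q := by
      rintro t ⟨⟨ht1, _⟩, ⟨ht2, _⟩⟩
      exact ⟨lt_of_lt_of_le (half_pos hx1) ht1, lt_of_lt_of_le (half_pos hx2) ht2⟩
    have hφK : IntegrableOn φ K := hloc.integrableOn_compact_subset hKQ hKc
    have hmulmeas : Measurable fun t : ℝ × ℝ => ff (x.1 / t.1) * ff (x.2 / t.2) :=
      (measurable_ff.comp (measurable_const.div measurable_fst)).mul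
        (measurable_ff.comp (measurable_const.div measurable_snd))
    have hIK : IntegrableOn
        (fun t : ℝ × ℝ => g (x.1 / t.1, x.2 / t.2) * (φ t / (t.1 * t.2))) K := by
      apply Integrable.mono' (hφK.abs.mul_const (2 / x.1 * (2 / x.2)))
      · simp only [div_eq_mul_inv]
        exact hmulmeas.aestronglyMeasurable.mul
          (hφK.aestronglyMeasurable.mul
            ((measurable_fst.mul measurable_snd).inv.aestronglyMeasurable))
      · apply (ae_restrict_iff' hKm).2 (Eventually.of_forall ?_)
        rintro t ⟨⟨ht1a, _⟩, ⟨ht2a, _⟩⟩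
        have ht1 : 0 < t.1 := lt_of_lt_of_le (half_pos hx1) ht1a
        have ht2 : 0 < t.2 := lt_of_lt_of_le (half_pos hx2) ht2a
        have h12 : (t.1 * t.2)⁻¹ ≤ 2 / x.1 * (2 / x.2) := by
          have hle : x.1 / 2 * (x.2 / 2) ≤ t.1 * t.2 :=
            mul_le_mul ht1a ht2a (le_of_lt (half_pos hx2)) (le_of_lt ht1)
          have heq : 2 / x.1 * (2 / x.2) = (x.1 / 2 * (x.2 / 2))⁻¹ := by
            rw [mul_inv, inv_div, inv_div]
          rw [heq]
          exact inv_anti₀ (by positivity) hle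
        show ‖ff (x.1 / t.1) * ff (x.2 / t.2) * (φ t / (t.1 * t.2))‖
          ≤ |φ t| * (2 / x.1 * (2 / x.2))
        rw [Real.norm_eq_abs, abs_mul, abs_div, abs_of_pos (mul_pos ht1 ht2), abs_mul]
        calc |ff (x.1 / t.1)| * |ff (x.2 / t.2)| * (|φ t| / (t.1 * t.2))
            ≤ 1 * 1 * (|φ t| * (2 / x.1 * (2 / x.2))) := by
              rw [div_eq_mul_inv]
              exact mul_le_mul (mul_le_mul (ff_abs_le _) (ff_abs_le _) (abs_nonneg _)
                  zero_le_one)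
                (mul_le_mul_of_nonneg_left h12 (abs_nonneg _))
                (by positivity) (by norm_num)
          _ = |φ t| * (2 / x.1 * (2 / x.2)) := by ring
    have hindic : Integrable
        (K.indicator fun t : ℝ × ℝ => g (x.1 / t.1, x.2 / t.2) * (φ t / (t.1 * t.2))) :=
      (integrable_indicator_iff hKm).2 hIK
    apply Integrable.congr hindic.integrableOn
    filter_upwards [self_mem_ae_restrict hQm] with t ht
    rcases ht with ⟨ht1, ht2⟩
    rw [mem_Ioi] at ht1 ht2
    by_cases htK : t ∈ K
    · rw [indicator_of_mem htK]
    · rw [indicator_of_notMem htK]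
      rw [hK, mem_prod, not_and_or] at htK
      have hz : ff (x.1 / t.1) * ff (x.2 / t.2) = 0 := by
        rcases htK with h | h
        · have : ff (x.1 / t.1) = 0 := by
            by_contra hne; exact h (ff_div_mem hx1 ht1 hne)
          rw [this, zero_mul]
        · have : ff (x.2 / t.2) = 0 := by
            by_contra hne; exact h (ff_div_mem hx2 ht2 hne)
          rw [this, mul_zero]
      show (0:ℝ) = ff (x.1 / t.1) * ff (x.2 / t.2) * (φ t / (t.1 * t.2))
      rw [hz, zero_mul]
  -- pointwise identity for x ∈ Q
  have hx_eq : ∀ x ∈ Q,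
      ENNReal.ofReal |∫ t in Q, g (x.1 / t.1, x.2 / t.2) * (φ t / (t.1 * t.2))|
        = ∫⁻ t in Q, ENNReal.ofReal (g (x.1 / t.1, x.2 / t.2) * (φ t / (t.1 * t.2))) := by
    intro x hx
    have hnn' : 0 ≤ᵐ[volume.restrict Q]
        fun t : ℝ × ℝ => g (x.1 / t.1, x.2 / t.2) * (φ t / (t.1 * t.2)) :=
      (ae_restrict_iff' hQm).2 (Eventually.of_forall fun t ht => hnn x hx t ht)
    rw [abs_of_nonneg (setIntegral_nonneg hQm fun t ht => hnn x hx t ht)]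
    exact ofReal_integral_eq_lintegral_ofReal (E1 x hx) hnn'
  -- measurability for Tonelli
  have hswap_meas : AEMeasurable (fun p : (ℝ × ℝ) × (ℝ × ℝ) =>
      ENNReal.ofReal (g (p.2.1 / p.1.1, p.2.2 / p.1.2) * (φ p.1 / (p.1.1 * p.1.2))))
      ((volume.restrict Q).prod (volume.restrict Q)) := by
    have hφm : AEMeasurable φ (volume.restrict Q) := hloc.aestronglyMeasurable.aemeasurable
    apply ENNReal.measurable_ofReal.comp_aemeasurable
    apply AEMeasurable.mul
    · exact ((measurable_ff.comp (measurable_snd.fst.div measurable_fst.fst)).mul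
        (measurable_ff.comp (measurable_snd.snd.div measurable_fst.snd))).aemeasurable
    · simp only [div_eq_mul_inv]
      exact (hφm.comp_quasiMeasurePreserving Measure.quasiMeasurePreserving_fst).mul
        ((measurable_fst.fst.mul measurable_fst.snd).inv.aemeasurable)
  -- restricted product measure
  have hrestr : (volume : Measure (ℝ × ℝ)).restrict Q
      = (volume.restrict (Ioi (0:ℝ))).prod (volume.restrict (Ioi (0:ℝ))) := by
    rw [Measure.prod_restrict, ← Measure.volume_eq_prod]
  -- Tonelli computation for fixed t ∈ Q
  have hTon : ∀ t ∈ Q,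
      (∫⁻ x in Q, ENNReal.ofReal (g (x.1 / t.1, x.2 / t.2) * (φ t / (t.1 * t.2))))
        = ENNReal.ofReal (φ t) := by
    rintro t ⟨ht1, ht2⟩
    rw [mem_Ioi] at ht1 ht2
    have hc0 : 0 ≤ φ t / (t.1 * t.2) := div_nonneg (hφ t ⟨ht1, ht2⟩)
      (le_of_lt (mul_pos ht1 ht2))
    calc (∫⁻ x in Q, ENNReal.ofReal (g (x.1 / t.1, x.2 / t.2) * (φ t / (t.1 * t.2))))
        = ∫⁻ x in Q, (ENNReal.ofReal (ff (x.1 / t.1)) * ENNReal.ofReal (ff (x.2 / t.2)))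
            * ENNReal.ofReal (φ t / (t.1 * t.2)) := by
          apply setLIntegral_congr_fun hQm ?_
          rintro x ⟨hx1, hx2⟩
          rw [mem_Ioi] at hx1 hx2
          have f1 : 0 ≤ ff (x.1 / t.1) := ff_nonneg (div_pos hx1 ht1)
          have f2 : 0 ≤ ff (x.2 / t.2) := ff_nonneg (div_pos hx2 ht2)
          show ENNReal.ofReal (ff (x.1 / t.1) * ff (x.2 / t.2) * (φ t / (t.1 * t.2))) = _
          rw [ENNReal.ofReal_mul (mul_nonneg f1 f2), ENNReal.ofReal_mul f1]
      _ = (∫⁻ x in Q, ENNReal.ofReal (ff (x.1 / t.1)) * ENNReal.ofReal (ff (x.2 / t.2)))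
            * ENNReal.ofReal (φ t / (t.1 * t.2)) := by
          apply lintegral_mul_const
          exact (ENNReal.measurable_ofReal.comp
              (measurable_ff.comp (measurable_fst.div_const t.1))).mul
            (ENNReal.measurable_ofReal.comp
              (measurable_ff.comp (measurable_snd.div_const t.2)))
      _ = (ENNReal.ofReal t.1 * ENNReal.ofReal t.2) * ENNReal.ofReal (φ t / (t.1 * t.2)) := by
          congr 1
          rw [hrestr]
          exact (lintegral_prod_mul
            ((ENNReal.measurable_ofReal.comp
              (measurable_ff.comp (measurable_id.div_const t.1))).aemeasurable)
            ((ENNReal.measurable_ofReal.comp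
              (measurable_ff.comp (measurable_id.div_const t.2))).aemeasurable)).trans
            (by
              show (∫⁻ x in Ioi (0:ℝ), ENNReal.ofReal (ff (x / t.1)))
                  * (∫⁻ x in Ioi (0:ℝ), ENNReal.ofReal (ff (x / t.2))) = _
              rw [lint_ff ht1, lint_ff ht2])
      _ = ENNReal.ofReal (φ t) := by
          rw [← ENNReal.ofReal_mul (le_of_lt ht1),
            ← ENNReal.ofReal_mul (mul_nonneg (le_of_lt ht1) (le_of_lt ht2))]
          congr 1
          field_simp
  -- conclusion
  calc (∫⁻ t in Q, ENNReal.ofReal (φ t))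
      = ∫⁻ t in Q, ∫⁻ x in Q,
          ENNReal.ofReal (g (x.1 / t.1, x.2 / t.2) * (φ t / (t.1 * t.2))) :=
        setLIntegral_congr_fun hQm (fun t ht => (hTon t ht).symm)
    _ = ∫⁻ x in Q, ∫⁻ t in Q,
          ENNReal.ofReal (g (x.1 / t.1, x.2 / t.2) * (φ t / (t.1 * t.2))) :=
        lintegral_lintegral_swap hswap_meas
    _ = ∫⁻ x in Q,
          ENNReal.ofReal |∫ t in Q, g (x.1 / t.1, x.2 / t.2) * (φ t / (t.1 * t.2))| :=
        setLIntegral_congr_fun hQm (fun x hx => (hx_eq x hx).symm)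
    _ ≤ ∫⁻ x : ℝ × ℝ,
          ENNReal.ofReal |∫ t in Q, g (x.1 / t.1, x.2 / t.2) * (φ t / (t.1 * t.2))| :=
        setLIntegral_le_lintegral _ _
    _ < ⊤ := hH
end
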